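/- Let Y₊ > 1/2 and suppose the time value of a call satisfies δC(k) ~ c₊ e^{-(Y₊ - 1/2)k} as k → +∞ with c₊ > 0. If the implied total variance v_imp(k) satisfies δC(k) = C^BS(v_imp(k), k) - (1-e^k)⁺ and v_imp(k)/k → β as k → ∞ for some β ∈ (0,2), then β = β₊ := 4(Y₊ - √(Y₊² - 1/4)), which is the unique solution in (0,2) of 1/(2β) - 1/2 + β/8 = Y₊ - 1/2. -/

import Mathlib

/-!
For large `k` the time value is the Black–Scholes price itself. With
`d₊ = (-k + v/2)/√v` and `d₋ = d₊ - √v` one has `e^k φ(d₋) = φ(d₊)`, so the Mills-ratio bounds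
`-x/(1+x²) φ(x) ≤ Φ(x) ≤ φ(x)/(-x)` squeeze `C^BS(v, k)` between `φ(d₊)` times two factors of
order `1/√k`. If `v(k) ~ βk` with `0 < β < 2`, then `d₊ ~ -√k (1 - β/2)/√β`, hence
`log C^BS(v(k), k) / k → -(1 - β/2)²/(2β) = -(1/(2β) - 1/2 + β/8)`, while the hypothesis on `δC`
gives the rate `-(Y - 1/2)`. Equating the rates is the matching equation; `β ↦ 1/(2β) + β/8` is
strictly decreasing on `(0, 2)`, and of the two roots of the quadratic it picks
`4(Y - √(Y² - 1/4))`.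
-/

open MeasureTheory Filter Topology

/-- Standard normal density. -/
noncomputable def gaussPDF (x : ℝ) : ℝ := Real.exp (-x ^ 2 / 2) / Real.sqrt (2 * Real.pi)

/-- Standard normal CDF. -/
noncomputable def gaussCDF (x : ℝ) : ℝ := ∫ t in Set.Iic x, gaussPDF t

/-- Non-dimensional Black-Scholes call price. -/
noncomputable def CBS (v k : ℝ) : ℝ :=
  gaussCDF ((-k + v / 2) / Real.sqrt v) - Real.exp k * gaussCDF ((-k - v / 2) / Real.sqrt v)

open Real Set

lemma gaussPDF_pos (x : ℝ) : 0 < gaussPDF x := by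
  unfold gaussPDF; positivity

lemma log_gaussPDF (x : ℝ) : log (gaussPDF x) = -x ^ 2 / 2 - log √(2 * π) := by
  rw [gaussPDF, log_div (exp_ne_zero _) (by positivity), log_exp]

lemma hasDerivAt_gaussPDF (t : ℝ) : HasDerivAt gaussPDF (-t * gaussPDF t) t := by
  have h : HasDerivAt (fun t : ℝ => -t ^ 2 / 2) (-t) t := by
    simpa using (((hasDerivAt_pow 2 t).neg).div_const 2).congr_deriv (by ring)
  show HasDerivAt (fun t => exp (-t ^ 2 / 2) / √(2 * π)) _ t
  exact (h.exp.div_const √(2 * π)).congr_deriv (by rw [gaussPDF]; ring)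

lemma continuous_gaussPDF : Continuous gaussPDF :=
  continuous_iff_continuousAt.2 fun t => (hasDerivAt_gaussPDF t).continuousAt

lemma integrable_gaussPDF : Integrable gaussPDF := by
  refine ((integrable_exp_neg_mul_sq (b := 1 / 2) (by norm_num)).div_const √(2 * π)).congr
    (Eventually.of_forall fun t => ?_)
  simp only [gaussPDF]; ring_nf

lemma integrable_neg_mul_gaussPDF : Integrable fun t => -t * gaussPDF t := by
  refine ((integrable_mul_exp_neg_mul_sq (b := 1 / 2) (by norm_num)).neg.div_const
    √(2 * π)).congr (Eventually.of_forall fun t => ?_)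
  simp only [Pi.neg_apply, gaussPDF]; ring_nf

lemma tendsto_gaussPDF_atBot : Tendsto gaussPDF atBot (𝓝 0) := by
  have hsq : Tendsto (fun t : ℝ => -t ^ 2 / 2) atBot atBot := by
    have := (tendsto_id.atBot_mul_atBot₀ tendsto_id).atTop_div_const (two_pos (α := ℝ))
    refine (tendsto_neg_atTop_atBot.comp this).congr fun t => ?_
    simp only [Function.comp_apply, id]; ring
  have := (tendsto_exp_atBot.comp hsq).div_const √(2 * π)
  rwa [zero_div] at this

lemma gaussCDF_nonneg (x : ℝ) : 0 ≤ gaussCDF x :=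
  setIntegral_nonneg measurableSet_Iic fun t _ => (gaussPDF_pos t).le

lemma gaussCDF_le_gaussPDF_div_neg {x : ℝ} (hx : x < 0) : gaussCDF x ≤ gaussPDF x / -x := by
  have hFTC : ∫ t in Iic x, -t * gaussPDF t = gaussPDF x := by
    rw [integral_Iic_of_hasDerivAt_of_tendsto' (fun t _ => hasDerivAt_gaussPDF t)
      integrable_neg_mul_gaussPDF.integrableOn tendsto_gaussPDF_atBot, sub_zero]
  calc gaussCDF x ≤ ∫ t in Iic x, -t * gaussPDF t / -x := by
        refine setIntegral_mono_on integrable_gaussPDF.integrableOn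
          (integrable_neg_mul_gaussPDF.div_const (-x)).integrableOn
          measurableSet_Iic fun t (ht : t ≤ x) => ?_
        rw [le_div_iff₀ (neg_pos.2 hx)]
        nlinarith [gaussPDF_pos t]
    _ = gaussPDF x / -x := by rw [integral_div, hFTC]

/-- The antiderivative is `-t / (1 + t²) · φ(t)`, whose derivative `(1 - 2 / (1 + t²)²) φ(t)`
is at most `φ(t)`. -/
lemma neg_div_one_add_sq_mul_gaussPDF_le_gaussCDF (x : ℝ) :
    -x / (1 + x ^ 2) * gaussPDF x ≤ gaussCDF x := by
  have hderiv (t : ℝ) : HasDerivAt (fun t => -t / (1 + t ^ 2) * gaussPDF t)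
      ((1 - 2 / (1 + t ^ 2) ^ 2) * gaussPDF t) t := by
    have hq : HasDerivAt (fun t : ℝ => -t / (1 + t ^ 2))
        ((-1 * (1 + t ^ 2) - -t * (2 * t)) / (1 + t ^ 2) ^ 2) t :=
      (hasDerivAt_id t).neg.div (by simpa using (hasDerivAt_pow 2 t).const_add 1)
        (by positivity)
    exact (hq.mul (hasDerivAt_gaussPDF t)).congr_deriv (by field_simp; ring)
  have hweight (t : ℝ) : 0 ≤ 2 / (1 + t ^ 2) ^ 2 ∧ 2 / (1 + t ^ 2) ^ 2 ≤ 2 :=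
    ⟨by positivity, div_le_self zero_le_two (one_le_pow₀ (by nlinarith))⟩
  have hF'_int : Integrable fun t => (1 - 2 / (1 + t ^ 2) ^ 2) * gaussPDF t := by
    refine integrable_gaussPDF.mono ((continuous_const.sub (continuous_const.div (by fun_prop)
      fun t => by positivity)).mul continuous_gaussPDF).aestronglyMeasurable
      (Eventually.of_forall fun t => ?_)
    rw [norm_mul, norm_eq_abs, norm_eq_abs (gaussPDF t), abs_of_pos (gaussPDF_pos t)]
    refine mul_le_of_le_one_left (gaussPDF_pos t).le (abs_le.2 ⟨?_, ?_⟩) <;>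
      linarith [hweight t]
  have hF_lim : Tendsto (fun t => -t / (1 + t ^ 2) * gaussPDF t) atBot (𝓝 0) := by
    refine squeeze_zero_norm (fun t => ?_) tendsto_gaussPDF_atBot
    simp only [norm_mul, norm_div, norm_neg, norm_eq_abs]
    rw [abs_of_pos (gaussPDF_pos t), abs_of_pos (by positivity : (0 : ℝ) < 1 + t ^ 2)]
    refine mul_le_of_le_one_left (gaussPDF_pos t).le ((div_le_one (by positivity)).2 ?_)
    nlinarith [sq_abs t, sq_nonneg (|t| - 1)]
  calc -x / (1 + x ^ 2) * gaussPDF x = ∫ t in Iic x, (1 - 2 / (1 + t ^ 2) ^ 2) * gaussPDF t := by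
        rw [integral_Iic_of_hasDerivAt_of_tendsto' (fun t _ => hderiv t) hF'_int.integrableOn
          hF_lim, sub_zero]
    _ ≤ gaussCDF x := setIntegral_mono_on hF'_int.integrableOn integrable_gaussPDF.integrableOn
          measurableSet_Iic fun t _ => by nlinarith [hweight t, gaussPDF_pos t]

noncomputable def dPlus (v k : ℝ) : ℝ := (-k + v / 2) / √v

noncomputable def dMinus (v k : ℝ) : ℝ := (-k - v / 2) / √v

lemma CBS_eq (v k : ℝ) : CBS v k = gaussCDF (dPlus v k) - exp k * gaussCDF (dMinus v k) := rfl

lemma exp_mul_gaussPDF_dMinus {v : ℝ} (hv : 0 < v) (k : ℝ) :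
    exp k * gaussPDF (dMinus v k) = gaussPDF (dPlus v k) := by
  rw [gaussPDF, gaussPDF, mul_div_assoc', ← exp_add, dMinus, dPlus, div_pow, div_pow,
    sq_sqrt hv.le]
  congr 2
  field_simp
  ring

lemma CBS_le {v k : ℝ} (h : dPlus v k < 0) : CBS v k ≤ gaussPDF (dPlus v k) / -dPlus v k := by
  have := mul_nonneg (exp_pos k).le (gaussCDF_nonneg (dMinus v k))
  rw [CBS_eq]
  linarith [gaussCDF_le_gaussPDF_div_neg h]

lemma le_CBS {v k : ℝ} (hv : 0 < v) (h : dMinus v k < 0) :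
    gaussPDF (dPlus v k) * (-dPlus v k / (1 + dPlus v k ^ 2) - 1 / -dMinus v k) ≤ CBS v k := by
  have hcall : exp k * gaussCDF (dMinus v k) ≤ gaussPDF (dPlus v k) / -dMinus v k := by
    rw [← exp_mul_gaussPDF_dMinus hv, mul_div_assoc]
    exact mul_le_mul_of_nonneg_left (gaussCDF_le_gaussPDF_div_neg h) (exp_pos k).le
  rw [CBS_eq, mul_sub, mul_one_div, mul_comm (gaussPDF _)]
  linarith [neg_div_one_add_sq_mul_gaussPDF_le_gaussCDF (dPlus v k)]

section ExponentialRate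

variable {f g p q lo hi : ℝ → ℝ} {C L : ℝ}

lemma eventually_pos_of_tendsto_sqrt_mul (hC : 0 < C)
    (hf : Tendsto (fun k => √k * f k) atTop (𝓝 C)) : ∀ᶠ k in atTop, 0 < f k := by
  filter_upwards [hf.eventually (lt_mem_nhds hC)] with k hk
  exact pos_of_mul_pos_right hk (sqrt_nonneg k)

lemma tendsto_log_div_of_tendsto_sqrt_mul (hC : 0 < C)
    (hf : Tendsto (fun k => √k * f k) atTop (𝓝 C)) :
    Tendsto (fun k => log (f k) / k) atTop (𝓝 0) := by
  have hlog : Tendsto (fun k => log (√k * f k) / k - log k / k / 2) atTop (𝓝 0) := by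
    simpa using ((hf.log hC.ne').div_atTop tendsto_id).sub
      (isLittleO_log_id_atTop.tendsto_div_nhds_zero.div_const 2)
  refine hlog.congr' ?_
  filter_upwards [eventually_gt_atTop 0, eventually_pos_of_tendsto_sqrt_mul hC hf] with k hk hfk
  rw [log_mul (sqrt_pos.2 hk).ne' hfk.ne', log_sqrt hk.le]
  ring

lemma tendsto_log_mul_div (hp : Tendsto (fun k => log (p k) / k) atTop (𝓝 L))
    (hp0 : ∀ᶠ k in atTop, 0 < p k) (hC : 0 < C)
    (hq : Tendsto (fun k => √k * q k) atTop (𝓝 C)) :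
    Tendsto (fun k => log (p k * q k) / k) atTop (𝓝 L) := by
  have hsum := hp.add (tendsto_log_div_of_tendsto_sqrt_mul hC hq)
  rw [add_zero] at hsum
  refine hsum.congr' ?_
  filter_upwards [hp0, eventually_pos_of_tendsto_sqrt_mul hC hq] with k hpk hqk
  rw [log_mul hpk.ne' hqk.ne', add_div]

lemma tendsto_log_div_of_le_of_le (hlo0 : ∀ᶠ k in atTop, 0 < lo k)
    (hlo_le : ∀ᶠ k in atTop, lo k ≤ g k) (hle_hi : ∀ᶠ k in atTop, g k ≤ hi k)
    (hlo : Tendsto (fun k => log (lo k) / k) atTop (𝓝 L))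
    (hhi : Tendsto (fun k => log (hi k) / k) atTop (𝓝 L)) :
    Tendsto (fun k => log (g k) / k) atTop (𝓝 L) := by
  refine tendsto_of_tendsto_of_tendsto_of_le_of_le' hlo hhi ?_ ?_ <;>
    filter_upwards [hlo0, hlo_le, hle_hi, eventually_gt_atTop 0] with k h0 h1 h2 hk <;>
    refine div_le_div_of_nonneg_right (log_le_log (by linarith) (by linarith)) hk.le

lemma tendsto_log_div_of_tendsto_div_exp {c r : ℝ} (hc : 0 < c)
    (hf : Tendsto (fun k => f k / (c * exp (r * k))) atTop (𝓝 1)) :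
    Tendsto (fun k => log (f k) / k) atTop (𝓝 r) := by
  have hlog : Tendsto (fun k => (log (f k / (c * exp (r * k))) + log c) / k + r) atTop (𝓝 r) := by
    simpa using (((hf.log one_ne_zero).add_const (log c)).div_atTop tendsto_id).add_const r
  refine hlog.congr' ?_
  filter_upwards [hf.eventually (lt_mem_nhds one_pos), eventually_gt_atTop 0] with k hq hk
  have hfk : 0 < f k := by
    have := mul_pos hq (by positivity : 0 < c * exp (r * k))
    rwa [div_mul_cancel₀ _ (by positivity)] at this
  rw [log_div hfk.ne' (by positivity), log_mul hc.ne' (exp_ne_zero _), log_exp]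
  field_simp
  ring

end ExponentialRate

section ImpliedVarianceAsymptotics

variable {v x : ℝ → ℝ} {β L : ℝ}

lemma eventually_pos_of_tendsto_div_self (hβ : 0 < β)
    (hlim : Tendsto (fun k => v k / k) atTop (𝓝 β)) : ∀ᶠ k in atTop, 0 < v k := by
  filter_upwards [hlim.eventually (lt_mem_nhds hβ), eventually_gt_atTop 0] with k hk hk0
  exact (div_pos_iff_of_pos_right hk0).1 hk

lemma tendsto_div_sqrt_of_tendsto_div_self (hβ : 0 < β)
    (hlim : Tendsto (fun k => v k / k) atTop (𝓝 β)) (s : ℝ) :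
    Tendsto (fun k => (-k + s * v k) / √(v k) / √k) atTop (𝓝 ((-1 + s * β) / √β)) := by
  refine (((tendsto_const_nhds.add (hlim.const_mul s)).div
    ((continuous_sqrt.tendsto β).comp hlim) (sqrt_pos.2 hβ).ne')).congr' ?_
  filter_upwards [eventually_gt_atTop 0, eventually_pos_of_tendsto_div_self hβ hlim]
    with k hk hvk
  rw [Pi.div_apply, Function.comp_apply, sqrt_div hvk.le]
  field_simp
  rw [sq_sqrt hk.le, mul_comm]

lemma tendsto_sqrt_mul_div_one_add_sq (hL : L ≠ 0)
    (hx : Tendsto (fun k => x k / √k) atTop (𝓝 L)) :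
    Tendsto (fun k => √k * (x k / (1 + x k ^ 2))) atTop (𝓝 (1 / L)) := by
  have hlim : Tendsto (fun k => x k / √k / (k⁻¹ + (x k / √k) ^ 2)) atTop (𝓝 (L / (0 + L ^ 2))) :=
    hx.div (tendsto_inv_atTop_zero.add (hx.pow 2)) (by positivity)
  rw [zero_add, sq, div_mul_cancel_left₀ hL, ← one_div] at hlim
  refine hlim.congr' ?_
  filter_upwards [eventually_gt_atTop 0] with k hk
  rw [div_pow, sq_sqrt hk.le]
  field_simp
  rw [sq_sqrt hk.le]

lemma tendsto_sqrt_mul_one_div_neg (hL : 0 < L)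
    (hx : Tendsto (fun k => x k / √k) atTop (𝓝 (-L))) :
    Tendsto (fun k => √k * (1 / -x k)) atTop (𝓝 (1 / L)) := by
  refine (hx.neg.inv₀ (by simpa using hL.ne')).congr' ?_ |>.trans_eq (by simp [one_div])
  filter_upwards [eventually_gt_atTop 0] with k hk
  field_simp

lemma tendsto_log_gaussPDF_div (hx : Tendsto (fun k => x k / √k) atTop (𝓝 L)) :
    Tendsto (fun k => log (gaussPDF (x k)) / k) atTop (𝓝 (-L ^ 2 / 2)) := by
  have hlim : Tendsto (fun k => -(x k / √k) ^ 2 / 2 - log √(2 * π) / k) atTop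
      (𝓝 (-L ^ 2 / 2 - 0)) :=
    ((hx.pow 2).neg.div_const 2).sub (tendsto_const_nhds.div_atTop tendsto_id)
  rw [sub_zero] at hlim
  refine hlim.congr' ?_
  filter_upwards [eventually_gt_atTop 0] with k hk
  rw [log_gaussPDF, div_pow, sq_sqrt hk.le]
  ring

end ImpliedVarianceAsymptotics

noncomputable def bsWingRate (β : ℝ) : ℝ := 1 / (2 * β) - 1 / 2 + β / 8

lemma sq_div_two_eq_bsWingRate {β : ℝ} (hβ : 0 < β) :
    ((1 - β / 2) / √β) ^ 2 / 2 = bsWingRate β := by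
  rw [div_pow, sq_sqrt hβ.le, bsWingRate]
  field_simp
  ring

theorem tendsto_log_CBS_div {v : ℝ → ℝ} {β : ℝ} (hβ : β ∈ Ioo 0 2)
    (hlim : Tendsto (fun k => v k / k) atTop (𝓝 β)) :
    Tendsto (fun k => log (CBS (v k) k) / k) atTop (𝓝 (-bsWingRate β)) := by
  obtain ⟨hβ0, hβ2⟩ := hβ
  have hsβ := sqrt_pos.2 hβ0
  set A := (1 - β / 2) / √β
  set B := (1 + β / 2) / √β
  have hA : 0 < A := div_pos (by linarith) hsβ
  have hB : 0 < B := div_pos (by linarith) hsβ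
  have hAB : A < B := div_lt_div_of_pos_right (by linarith) hsβ
  have hdp : Tendsto (fun k => dPlus (v k) k / √k) atTop (𝓝 (-A)) :=
    ((tendsto_div_sqrt_of_tendsto_div_self hβ0 hlim (1 / 2)).congr
      fun k => by rw [dPlus]; ring).trans_eq (by congr 1; simp only [A]; ring)
  have hdm : Tendsto (fun k => dMinus (v k) k / √k) atTop (𝓝 (-B)) :=
    ((tendsto_div_sqrt_of_tendsto_div_self hβ0 hlim (-1 / 2)).congr
      fun k => by rw [dMinus]; ring).trans_eq (by congr 1; simp only [B]; ring)
  have hup := tendsto_sqrt_mul_one_div_neg hA hdp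
  have hlo : Tendsto (fun k => √k * (-dPlus (v k) k / (1 + dPlus (v k) k ^ 2)
      - 1 / -dMinus (v k) k)) atTop (𝓝 (1 / A - 1 / B)) :=
    (((tendsto_sqrt_mul_div_one_add_sq (neg_ne_zero.2 hA.ne') hdp).neg.sub
      (tendsto_sqrt_mul_one_div_neg hB hdm)).congr fun k => by ring).trans_eq
      (by rw [one_div_neg_eq_neg_one_div, neg_neg])
  have hrate : Tendsto (fun k => log (gaussPDF (dPlus (v k) k)) / k) atTop (𝓝 (-bsWingRate β)) :=
    (tendsto_log_gaussPDF_div hdp).trans_eq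
      (by rw [neg_sq, neg_div, sq_div_two_eq_bsWingRate hβ0])
  have hlo_pos : 0 < 1 / A - 1 / B := sub_pos.2 (one_div_lt_one_div_of_lt hA hAB)
  refine tendsto_log_div_of_le_of_le ?_ ?_ ?_
    (tendsto_log_mul_div hrate (.of_forall fun _ => gaussPDF_pos _) hlo_pos hlo)
    (tendsto_log_mul_div hrate (.of_forall fun _ => gaussPDF_pos _) (one_div_pos.2 hA) hup)
  · filter_upwards [eventually_pos_of_tendsto_sqrt_mul hlo_pos hlo] with k hk
    exact mul_pos (gaussPDF_pos _) hk
  · filter_upwards [eventually_pos_of_tendsto_div_self hβ0 hlim,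
      eventually_pos_of_tendsto_sqrt_mul (one_div_pos.2 hB)
        (tendsto_sqrt_mul_one_div_neg hB hdm)] with k hvk hk
    exact le_CBS hvk (neg_pos.1 (one_div_pos.1 hk))
  · filter_upwards [eventually_pos_of_tendsto_sqrt_mul (one_div_pos.2 hA) hup] with k hk
    exact (CBS_le (neg_pos.1 (one_div_pos.1 hk))).trans_eq (div_eq_mul_one_div _ _)

lemma strictAntiOn_bsWingRate : StrictAntiOn bsWingRate (Ioo 0 2) := by
  rintro x ⟨hx0, hx2⟩ y ⟨hy0, hy2⟩ hxy
  have hdiff : bsWingRate x - bsWingRate y = (y - x) * (4 - x * y) / (8 * x * y) := by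
    unfold bsWingRate; field_simp; ring
  have : 0 < (y - x) * (4 - x * y) / (8 * x * y) :=
    div_pos (mul_pos (by linarith) (by nlinarith)) (by positivity)
  linarith

lemma eq_four_mul_sub_sqrt_of_bsWingRate_eq {β Y : ℝ} (hβ : β ∈ Ioo 0 2)
    (h : bsWingRate β = Y - 1 / 2) : β = 4 * (Y - √(Y ^ 2 - 1 / 4)) := by
  obtain ⟨hβ0, hβ2⟩ := hβ
  have hY : Y = 1 / (2 * β) + β / 8 := by unfold bsWingRate at h; linarith
  have hroot : 0 ≤ 1 / (2 * β) - β / 8 := by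
    rw [sub_nonneg, div_le_div_iff₀ (by norm_num) (mul_pos two_pos hβ0)]; nlinarith
  have hsq : Y ^ 2 - 1 / 4 = (1 / (2 * β) - β / 8) ^ 2 := by
    rw [hY]; field_simp; ring
  rw [hsq, sqrt_sq hroot, hY]
  ring

theorem lee_wing_matching_general (Y c β : ℝ) (δC vimp : ℝ → ℝ)
    (hc : 0 < c)
    (hδ : ∀ k, δC k = CBS (vimp k) k - max (1 - Real.exp k) 0)
    (hasym : Tendsto (fun k => δC k / (c * Real.exp (-(Y - 1 / 2) * k))) atTop (𝓝 1))
    (hβ : β ∈ Set.Ioo (0 : ℝ) 2)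
    (hlim : Tendsto (fun k => vimp k / k) atTop (𝓝 β)) :
    β = 4 * (Y - Real.sqrt (Y ^ 2 - 1 / 4)) ∧
      (1 / (2 * β) - 1 / 2 + β / 8 = Y - 1 / 2) ∧
      (∀ β' ∈ Set.Ioo (0 : ℝ) 2, 1 / (2 * β') - 1 / 2 + β' / 8 = Y - 1 / 2 → β' = β) := by
  have hδ_eq : (fun k => log (δC k) / k) =ᶠ[atTop] fun k => log (CBS (vimp k) k) / k := by
    filter_upwards [eventually_ge_atTop 0] with k hk
    rw [hδ, max_eq_right (by linarith [one_le_exp hk]), sub_zero]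
  have hmatch : bsWingRate β = Y - 1 / 2 := neg_injective <| tendsto_nhds_unique
    ((tendsto_log_CBS_div hβ hlim).congr' hδ_eq.symm) (tendsto_log_div_of_tendsto_div_exp hc hasym)
  exact ⟨eq_four_mul_sub_sqrt_of_bsWingRate_eq hβ hmatch, hmatch,
    fun β' hβ' h' => strictAntiOn_bsWingRate.injOn hβ' hβ (h'.trans hmatch.symm)⟩

/-- Lee-type wing matching: if the call time value decays like `c₊ e^{-(Y₊-1/2)k}` and the
implied total variance satisfies `v_imp(k)/k → β ∈ (0,2)`, then
`β = β₊ = 4(Y₊ - √(Y₊² - 1/4))`, the unique solution in `(0,2)` of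
`1/(2β) - 1/2 + β/8 = Y₊ - 1/2`. -/
theorem lee_wing_matching (Y c β : ℝ) (δC vimp : ℝ → ℝ)
    (hY : 1 / 2 < Y) (hc : 0 < c)
    (hvpos : ∀ k, 0 < vimp k)
    (hδ : ∀ k, δC k = CBS (vimp k) k - max (1 - Real.exp k) 0)
    (hasym : Tendsto (fun k => δC k / (c * Real.exp (-(Y - 1 / 2) * k))) atTop (𝓝 1))
    (hβ : β ∈ Set.Ioo (0 : ℝ) 2)
    (hlim : Tendsto (fun k => vimp k / k) atTop (𝓝 β)) :
    β = 4 * (Y - Real.sqrt (Y ^ 2 - 1 / 4)) ∧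
      (1 / (2 * β) - 1 / 2 + β / 8 = Y - 1 / 2) ∧
      (∀ β' ∈ Set.Ioo (0 : ℝ) 2, 1 / (2 * β') - 1 / 2 + β' / 8 = Y - 1 / 2 → β' = β) :=
  lee_wing_matching_general Y c β δC vimp hc hδ hasym hβ hlim
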